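/- arXiv:2112.10560 — 7 statements merged into one kernel-verified Lean document; each statement's English description precedes it below -/
import Mathlib

section
/- For all $x, y, u, r \in (0,1)$, we have $x + r(\mathbf{1}_{\{u \le x\}}(1-x) - \mathbf{1}_{\{u > x\}} x) \ge y$ if and only if $x \ge \mathrm{median}\left(\frac{y-r}{1-r}, \frac{y}{1-r}, u\right)$. -/
noncomputable def median (a b c : ℝ) : ℝ := max (min a b) (min (max a b) c)

theorem median_le_iff_of_le {a b c x : ℝ} (hab : a ≤ b) :
    median a b c ≤ x ↔ a ≤ x ∧ (b ≤ x ∨ c ≤ x) := by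
  rw [median, min_eq_left hab, max_eq_right hab, max_le_iff, min_le_iff]

theorem stmt0_general (x y u r : ℝ) (hr : r ∈ Set.Ioo (0:ℝ) 1) :
    x + r * ((if u ≤ x then (1:ℝ) else 0) * (1 - x) - (if u > x then (1:ℝ) else 0) * x) ≥ y ↔
      x ≥ median ((y - r) / (1 - r)) (y / (1 - r)) u := by
  obtain ⟨hr0, hr1⟩ := hr
  have h1r : 0 < 1 - r := sub_pos.mpr hr1
  have hab : (y - r) / (1 - r) ≤ y / (1 - r) := div_le_div_of_nonneg_right (by linarith) h1r.le
  rw [ge_iff_le, ge_iff_le, median_le_iff_of_le hab, div_le_iff₀ h1r, div_le_iff₀ h1r]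
  by_cases hux : u ≤ x
  · rw [if_pos hux, if_neg hux.not_gt, or_iff_right_of_imp fun _ => hux, and_iff_left hux]
    constructor <;> intro h <;> linarith
  · rw [if_neg hux, if_pos (not_le.mp hux), or_iff_left hux]
    constructor
    · intro h
      constructor <;> linarith
    · rintro ⟨-, h⟩
      linarith

theorem stmt0 (x y u r : ℝ) (hx : x ∈ Set.Ioo (0:ℝ) 1) (hy : y ∈ Set.Ioo (0:ℝ) 1)
    (hu : u ∈ Set.Ioo (0:ℝ) 1) (hr : r ∈ Set.Ioo (0:ℝ) 1) :
    x + r * ((if u ≤ x then (1:ℝ) else 0) * (1 - x) - (if u > x then (1:ℝ) else 0) * x) ≥ y ↔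
      x ≥ median ((y - r) / (1 - r)) (y / (1 - r)) u :=
  stmt0_general x y u r hr
end

section
/- For all $r \in (0,1/2]$ and $y \in [0,1]$, letting $m_{r,u}(y) = \mathrm{median}\left(\frac{y-r}{1-r}, \frac{y}{1-r}, u\right)$, we have $\left| \int_0^1 (m_{r,u}(y) - y)\, du \right| \le 2r^2$ and $\int_0^1 (m_{r,u}(y) - y)^2\, du \le 4r^2$. -/
noncomputable def mru (r u y : ℝ) : ℝ := median ((y - r) / (1 - r)) (y / (1 - r)) u

/-!
For `a ≤ b`, `u ↦ median a b u` clamps `u` to `[a, b]` and equals `u + (a - u)⁺ - (u - b)⁺`, so its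
integral over `[0, 1]` is explicit. With `s = r / (1 - r) ≤ 2 r`, the clamp interval of `mru r · y` is
`[y - s (1 - y), y + s y]`, of length `s` and containing `y`. The mean deviation from `y` is
`(1/2 - y) s²` when this interval lies in `[0, 1]`, and is only pulled towards `0` otherwise, giving
the bound `s² / 2`; the squared deviation is at most `s²` pointwise.
-/

lemma median_eq_add_posPart_sub_posPart {a b : ℝ} (hab : a ≤ b) (u : ℝ) :
    median a b u = u + (a - u)⁺ - (u - b)⁺ := by
  simp only [median, min_eq_left hab, max_eq_right hab, posPart_def]
  rcases le_total u a with hua | hau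
  · rw [max_eq_left (by linarith : 0 ≤ a - u), max_eq_right (by linarith : u - b ≤ 0),
      min_eq_right (hua.trans hab), max_eq_left hua]
    ring
  rcases le_total u b with hub | hbu
  · rw [max_eq_right (by linarith : a - u ≤ 0), max_eq_right (by linarith : u - b ≤ 0),
      min_eq_right hub, max_eq_right hau]
    ring
  · rw [max_eq_right (by linarith : a - u ≤ 0), max_eq_left (by linarith : 0 ≤ u - b),
      min_eq_left hbu, max_eq_right hab]
    ring

lemma median_mem_Icc {a b : ℝ} (hab : a ≤ b) (u : ℝ) : median a b u ∈ Set.Icc a b := by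
  simp only [median, min_eq_left hab, max_eq_right hab]
  exact ⟨le_max_left _ _, max_le hab (min_le_left _ _)⟩

lemma continuous_median (a b : ℝ) : Continuous (median a b) := by
  unfold median
  fun_prop

lemma integral_posPart_const_sub {c : ℝ} (hc : c ≤ 1) :
    ∫ u in (0:ℝ)..1, (c - u)⁺ = c⁺ ^ 2 / 2 := by
  have hcont : Continuous fun u : ℝ => (c - u)⁺ := continuous_posPart.comp (by fun_prop)
  have hd0 : 0 ≤ c⁺ := posPart_nonneg c
  have hd1 : c⁺ ≤ 1 := sup_le hc zero_le_one
  have hleft : ∫ u in (0:ℝ)..c⁺, (c - u)⁺ = c⁺ ^ 2 / 2 := by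
    rw [intervalIntegral.integral_congr (g := fun u => c⁺ - u)]
    · simp [intervalIntegral.integral_comp_sub_left fun x => x]
    rintro u hu
    rw [Set.uIcc_of_le hd0] at hu
    obtain ⟨hu0, hu1⟩ := hu
    dsimp only
    rcases le_total c 0 with h | h
    · rw [posPart_eq_zero.2 h] at hu1 ⊢
      rw [posPart_eq_zero.2 (by linarith)]
      linarith
    · rw [posPart_eq_self.2 h] at hu1 ⊢
      exact posPart_eq_self.2 (by linarith)
  have hright : ∫ u in c⁺..1, (c - u)⁺ = 0 := by
    rw [intervalIntegral.integral_congr (g := fun _ => 0)]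
    · simp
    intro u hu
    rw [Set.uIcc_of_le hd1] at hu
    exact posPart_eq_zero.2 (by linarith [hu.1, le_posPart c])
  rw [← intervalIntegral.integral_add_adjacent_intervals (hcont.intervalIntegrable 0 c⁺)
    (hcont.intervalIntegrable c⁺ 1), hleft, hright, add_zero]

lemma integral_posPart_sub_const {c : ℝ} (hc : 0 ≤ c) :
    ∫ u in (0:ℝ)..1, (u - c)⁺ = (1 - c)⁺ ^ 2 / 2 := by
  have := intervalIntegral.integral_comp_sub_left (fun u => (1 - c - u)⁺) (a := 0) (b := 1) 1
  simp only [sub_zero, sub_self, sub_sub_sub_cancel_left] at this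
  rw [← integral_posPart_const_sub (by linarith : 1 - c ≤ 1), ← this]

lemma integral_median {a b : ℝ} (hab : a ≤ b) (ha : a ≤ 1) (hb : 0 ≤ b) :
    ∫ u in (0:ℝ)..1, median a b u = 1 / 2 + a⁺ ^ 2 / 2 - (1 - b)⁺ ^ 2 / 2 := by
  have hl : Continuous fun u : ℝ => (a - u)⁺ := continuous_posPart.comp (by fun_prop)
  have hr : Continuous fun u : ℝ => (u - b)⁺ := continuous_posPart.comp (by fun_prop)
  have hid : Continuous fun u : ℝ => u + (a - u)⁺ := continuous_id.add hl
  simp only [median_eq_add_posPart_sub_posPart hab]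
  rw [intervalIntegral.integral_sub (hid.intervalIntegrable _ _)
      (hr.intervalIntegrable _ _),
    intervalIntegral.integral_add intervalIntegral.intervalIntegrable_id (hl.intervalIntegrable _ _),
    integral_id, integral_posPart_const_sub ha, integral_posPart_sub_const hb]
  ring

lemma abs_integral_median_sub_le {s y : ℝ} (hs0 : 0 ≤ s) (hs1 : s ≤ 1) (hy0 : 0 ≤ y) (hy1 : y ≤ 1) :
    |∫ u in (0:ℝ)..1, (median (y - s * (1 - y)) (y + s * y) u - y)| ≤ s ^ 2 / 2 := by
  rw [intervalIntegral.integral_sub ((continuous_median _ _).intervalIntegrable _ _)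
      intervalIntegrable_const, integral_median (by nlinarith) (by nlinarith) (by nlinarith)]
  simp only [intervalIntegral.integral_const, sub_zero, one_smul]
  rw [abs_le]
  rcases le_total (y - s * (1 - y)) 0 with ha | ha <;> rcases le_total (1 - (y + s * y)) 0 with hb | hb <;>
    simp only [posPart_eq_zero.2, posPart_eq_self.2, ha, hb] <;> constructor <;>
    nlinarith [mul_nonneg (mul_nonneg hs0 hs0) (sub_nonneg.2 hs1), mul_nonneg hs0 hy0,
      mul_nonneg hs0 (sub_nonneg.2 hy1), mul_nonneg (mul_nonneg hs0 hs0) hy0,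
      mul_nonneg (mul_nonneg hs0 hs0) (sub_nonneg.2 hy1)]

lemma integral_sq_median_sub_le {a b y : ℝ} (hay : a ≤ y) (hyb : y ≤ b) :
    ∫ u in (0:ℝ)..1, (median a b u - y) ^ 2 ≤ (b - a) ^ 2 := by
  have hab := hay.trans hyb
  have hbound : ∀ u, ‖(median a b u - y) ^ 2‖ ≤ (b - a) ^ 2 := fun u => by
    obtain ⟨hma, hmb⟩ := median_mem_Icc hab u
    rw [Real.norm_eq_abs, abs_sq, sq_le_sq, abs_of_nonneg (sub_nonneg.2 hab), abs_le]
    constructor <;> linarith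
  calc ∫ u in (0:ℝ)..1, (median a b u - y) ^ 2
      ≤ ‖∫ u in (0:ℝ)..1, (median a b u - y) ^ 2‖ := Real.le_norm_self _
    _ ≤ (b - a) ^ 2 * |1 - 0| := intervalIntegral.norm_integral_le_of_norm_le_const fun u _ => hbound u
    _ = (b - a) ^ 2 := by norm_num

theorem stmt4 (r y : ℝ) (hr : r ∈ Set.Ioc (0:ℝ) (1/2)) (hy : y ∈ Set.Icc (0:ℝ) 1) :
    |∫ u in (0:ℝ)..1, (mru r u y - y)| ≤ 2 * r ^ 2 ∧
      (∫ u in (0:ℝ)..1, (mru r u y - y) ^ 2) ≤ 4 * r ^ 2 := by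
  obtain ⟨hr0, hr1⟩ := hr
  obtain ⟨hy0, hy1⟩ := hy
  have hd : 0 < 1 - r := by linarith
  set s := r / (1 - r) with hs_def
  have hs0 : 0 ≤ s := by positivity
  have hs : s ≤ 2 * r := by rw [div_le_iff₀ hd]; nlinarith
  have hm : ∀ u, mru r u y = median (y - s * (1 - y)) (y + s * y) u := fun u => by
    unfold mru
    rw [hs_def]
    congr 1 <;> field_simp <;> ring
  simp only [hm]
  constructor
  · calc _ ≤ s ^ 2 / 2 := abs_integral_median_sub_le hs0 (by linarith) hy0 hy1
      _ ≤ 2 * r ^ 2 := by nlinarith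
  · calc _ ≤ (y + s * y - (y - s * (1 - y))) ^ 2 :=
          integral_sq_median_sub_le (by nlinarith) (by nlinarith)
      _ = s ^ 2 := by ring
      _ ≤ 4 * r ^ 2 := by nlinarith
end

section
/- For $r \in (0,1)$ with $r \le y \le 1-r$ and $y \in [0,1]$, $\int_0^1 (m_{r,u}(y) - y)\, du = \frac{r^2}{(1-r)^2}\left(\frac{1}{2} - y\right)$. -/
theorem median_of_le {a b : ℝ} (hab : a ≤ b) (u : ℝ) : median a b u = max a (min b u) := by
  rw [median, min_eq_left hab, max_eq_right hab]

theorem integral_max_min {a b c d : ℝ} (hca : c ≤ a) (hab : a ≤ b) (hbd : b ≤ d) :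
    ∫ u in c..d, max a (min b u) = a * (a - c) + (b ^ 2 - a ^ 2) / 2 + b * (d - b) := by
  have hint (s t : ℝ) : IntervalIntegrable (fun u => max a (min b u)) MeasureTheory.volume s t :=
    Continuous.intervalIntegrable (by fun_prop) s t
  have lower : ∫ u in c..a, max a (min b u) = ∫ _ in c..a, a := by
    refine intervalIntegral.integral_congr fun u hu => ?_
    rw [Set.uIcc_of_le hca] at hu
    simp only [min_eq_right (hu.2.trans hab), max_eq_left hu.2]
  have middle : ∫ u in a..b, max a (min b u) = ∫ u in a..b, u := by
    refine intervalIntegral.integral_congr fun u hu => ?_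
    rw [Set.uIcc_of_le hab] at hu
    simp only [min_eq_right hu.2, max_eq_right hu.1]
  have upper : ∫ u in b..d, max a (min b u) = ∫ _ in b..d, b := by
    refine intervalIntegral.integral_congr fun u hu => ?_
    rw [Set.uIcc_of_le hbd] at hu
    simp only [min_eq_left hu.1, max_eq_right hab]
  rw [← intervalIntegral.integral_add_adjacent_intervals (hint c b) (hint b d),
    ← intervalIntegral.integral_add_adjacent_intervals (hint c a) (hint a b),
    lower, middle, upper, intervalIntegral.integral_const, intervalIntegral.integral_const,
    integral_id, smul_eq_mul, smul_eq_mul]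
  ring

theorem stmt5_general (r y : ℝ) (hr : r ∈ Set.Ioo (0:ℝ) 1)
    (h1 : r ≤ y) (h2 : y ≤ 1 - r) :
    (∫ u in (0:ℝ)..1, (mru r u y - y)) = r ^ 2 / (1 - r) ^ 2 * (1 / 2 - y) := by
  obtain ⟨hr0, hr1⟩ := hr
  have h1r : 0 < 1 - r := by linarith
  have hab : (y - r) / (1 - r) ≤ y / (1 - r) := by gcongr; linarith
  have ha0 : 0 ≤ (y - r) / (1 - r) := div_nonneg (by linarith) h1r.le
  have hb1 : y / (1 - r) ≤ 1 := (div_le_one h1r).mpr h2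
  simp only [mru, median_of_le hab]
  rw [intervalIntegral.integral_sub
      (Continuous.intervalIntegrable (by fun_prop) 0 1) intervalIntegrable_const,
    integral_max_min ha0 hab hb1, intervalIntegral.integral_const, smul_eq_mul]
  field_simp
  ring

theorem stmt5 (r y : ℝ) (hr : r ∈ Set.Ioo (0:ℝ) 1) (hy : y ∈ Set.Icc (0:ℝ) 1)
    (h1 : r ≤ y) (h2 : y ≤ 1 - r) :
    (∫ u in (0:ℝ)..1, (mru r u y - y)) = r ^ 2 / (1 - r) ^ 2 * (1 / 2 - y) :=
  stmt5_general r y hr h1 h2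
end

section
/- For every $\alpha \ge 1$ and all $x, y \in [0,1]$, $\int_0^1 |\mathrm{median}(y-1, y, (u-x)\alpha) - \mathrm{median}(x-1, x, (u-x)\alpha)|\, du \le 3|x-y|$. -/
/-! The median is built from `max` and `min`, each of which is 1-Lipschitz for the sup norm, so
`median (y - 1) y t` differs from `median (x - 1) x t` by at most `|x - y|` for every `t`; integrating
over an interval of length one gives the bound `|x - y| ≤ 3 * |x - y|`. -/

theorem abs_median_sub_median_le (a b a' b' c : ℝ) :
    |median a b c - median a' b' c| ≤ max |a - a'| |b - b'| := by
  have hmin : |min a b - min a' b'| ≤ max |a - a'| |b - b'| := abs_min_sub_min_le_max a b a' b'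
  have hmax : |max a b - max a' b'| ≤ max |a - a'| |b - b'| := abs_max_sub_max_le_max a b a' b'
  have hclip : |min (max a b) c - min (max a' b') c| ≤ max |a - a'| |b - b'| := by
    refine (abs_min_sub_min_le_max _ _ _ _).trans (max_le hmax ?_)
    simp only [sub_self, abs_zero]
    positivity
  exact (abs_max_sub_max_le_max _ _ _ _).trans (max_le hmin hclip)

theorem abs_median_shift_sub_median_shift_le (d x y c : ℝ) :
    |median (y - d) y c - median (x - d) x c| ≤ |x - y| := by
  simpa [abs_sub_comm y x] using abs_median_sub_median_le (y - d) y (x - d) x c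

theorem stmt8_general (α x y : ℝ) :
    (∫ u in (0:ℝ)..1,
      |median (y - 1) y ((u - x) * α) - median (x - 1) x ((u - x) * α)|) ≤ 3 * |x - y| := by
  have hnorm := intervalIntegral.norm_integral_le_of_norm_le_const (a := 0) (b := 1)
    (C := |x - y|) (f := fun u => |median (y - 1) y ((u - x) * α) - median (x - 1) x ((u - x) * α)|)
    (fun u _ => by simpa using abs_median_shift_sub_median_shift_le 1 x y ((u - x) * α))
  calc (∫ u in (0:ℝ)..1, |median (y - 1) y ((u - x) * α) - median (x - 1) x ((u - x) * α)|)
      ≤ |x - y| := by simpa using (le_abs_self _).trans hnorm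
    _ ≤ 3 * |x - y| := by linarith [abs_nonneg (x - y)]

theorem stmt8 (α x y : ℝ) (hα : 1 ≤ α) (hx : x ∈ Set.Icc (0:ℝ) 1) (hy : y ∈ Set.Icc (0:ℝ) 1) :
    (∫ u in (0:ℝ)..1,
      |median (y - 1) y ((u - x) * α) - median (x - 1) x ((u - x) * α)|) ≤ 3 * |x - y| :=
  stmt8_general α x y
end

section
/- Let $y \in (0, 1/2]$ and $r \in (0, 1/2]$, and let $m_{r,u}(y) = \mathrm{median}\left(\frac{y-r}{1-r}, \frac{y}{1-r}, u\right)$. Then $\int_0^1 \frac{1}{\sqrt{m_{r,u}(y)}}\, du = \frac{y + 1 - r - \sqrt{y(y-r)}\,\mathbf{1}_{\{r \le y\}}}{\sqrt{y(1-r)}}$. -/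
/-!
For `r ≤ 1/2` the map `u ↦ m_{r,u}(y)` is `u` clamped to `[a, b]` with `a = (y - r)/(1 - r)`,
`b = y/(1 - r) ≤ 1`. So `1/√m` is `1/√a` on `[0, a]`, `1/√u` on `[a, b]` and `1/√b` on `[b, 1]`,
and `∫₀¹ 1/√m = 2√b - √a + (1 - b)/√b`. When `y < r` the first piece is empty, which is the
same formula because `√a = 0`, just as the indicator can be dropped because `√(y(y - r)) = 0`.
Multiplying by `√(y(1 - r)) = (1 - r)√b` gives the claim.
-/

open Real Set MeasureTheory intervalIntegral

lemma median_eq_max_min {a b : ℝ} (hab : a ≤ b) (c : ℝ) : median a b c = max a (min b c) := by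
  rw [median, min_eq_left hab, max_eq_right hab]

lemma one_div_sqrt_eq_rpow {u : ℝ} (hu : 0 ≤ u) : 1 / √u = u ^ (-(1 / 2) : ℝ) := by
  rw [rpow_neg hu, ← sqrt_eq_rpow, one_div]

lemma eqOn_one_div_sqrt_rpow {a b : ℝ} (ha : 0 ≤ a) (hb : 0 ≤ b) :
    EqOn (fun u => 1 / √u) (fun u => u ^ (-(1 / 2) : ℝ)) (uIcc a b) := fun _ hu =>
  one_div_sqrt_eq_rpow (le_min ha hb |>.trans hu.1)

lemma intervalIntegrable_one_div_sqrt {a b : ℝ} (ha : 0 ≤ a) (hb : 0 ≤ b) :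
    IntervalIntegrable (fun u => 1 / √u) volume a b :=
  (intervalIntegrable_rpow' (by norm_num)).congr
    (eqOn_one_div_sqrt_rpow ha hb |>.symm.mono uIoc_subset_uIcc)

lemma integral_one_div_sqrt {a b : ℝ} (ha : 0 ≤ a) (hb : 0 ≤ b) :
    ∫ u in a..b, 1 / √u = 2 * √b - 2 * √a := by
  rw [integral_congr (eqOn_one_div_sqrt_rpow ha hb), integral_rpow (Or.inl (by norm_num)),
    show (-(1 / 2) : ℝ) + 1 = 1 / 2 by norm_num, ← sqrt_eq_rpow, ← sqrt_eq_rpow]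
  ring

lemma integral_one_div_sqrt_max_min_of_nonneg {a b : ℝ} (ha : 0 ≤ a) (hab : a ≤ b)
    (hb : b ≤ 1) :
    ∫ u in (0 : ℝ)..1, 1 / √(max a (min b u)) = 2 * √b - √a + (1 - b) / √b := by
  set f := fun u : ℝ => 1 / √(max a (min b u))
  have h₁ : EqOn f (fun _ => 1 / √a) (uIcc 0 a) := fun u hu => by
    rw [uIcc_of_le ha] at hu
    simp only [f, min_eq_right (hu.2.trans hab), max_eq_left hu.2]
  have h₂ : EqOn f (fun u => 1 / √u) (uIcc a b) := fun u hu => by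
    rw [uIcc_of_le hab] at hu
    simp only [f, min_eq_right hu.2, max_eq_right hu.1]
  have h₃ : EqOn f (fun _ => 1 / √b) (uIcc b 1) := fun u hu => by
    rw [uIcc_of_le hb] at hu
    simp only [f, min_eq_left hu.1, max_eq_right hab]
  have i₁ : IntervalIntegrable f volume 0 a :=
    intervalIntegrable_const.congr (h₁.symm.mono uIoc_subset_uIcc)
  have i₂ : IntervalIntegrable f volume a b :=
    (intervalIntegrable_one_div_sqrt ha (ha.trans hab)).congr (h₂.symm.mono uIoc_subset_uIcc)
  have i₃ : IntervalIntegrable f volume b 1 :=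
    intervalIntegrable_const.congr (h₃.symm.mono uIoc_subset_uIcc)
  rw [← integral_add_adjacent_intervals (i₁.trans i₂) i₃, ← integral_add_adjacent_intervals i₁ i₂,
    integral_congr h₁, integral_congr h₂, integral_congr h₃, intervalIntegral.integral_const,
    intervalIntegral.integral_const, integral_one_div_sqrt ha (ha.trans hab), smul_eq_mul,
    smul_eq_mul, sub_zero, mul_one_div, div_sqrt]
  ring

lemma integral_one_div_sqrt_max_min {a b : ℝ} (hab : a ≤ b) (hb₀ : 0 ≤ b) (hb : b ≤ 1) :
    ∫ u in (0 : ℝ)..1, 1 / √(max a (min b u)) = 2 * √b - √a + (1 - b) / √b := by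
  have hclamp : EqOn (fun u => 1 / √(max a (min b u))) (fun u => 1 / √(max (max a 0) (min b u)))
      (uIcc 0 1) := fun u hu => by
    rw [uIcc_of_le zero_le_one] at hu
    simp only [max_assoc, max_eq_right (le_min hb₀ hu.1)]
  rw [integral_congr hclamp, integral_one_div_sqrt_max_min_of_nonneg (le_max_right a 0)
    (max_le hab hb₀) hb]
  rcases le_total a 0 with ha | ha
  · rw [max_eq_right ha, sqrt_zero, sqrt_eq_zero'.mpr ha]
  · rw [max_eq_left ha]

lemma two_sqrt_div_sub_sqrt_div_add_div_sqrt_div_eq {r y : ℝ} (hr : r < 1) (hy : 0 < y) :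
    2 * √(y / (1 - r)) - √((y - r) / (1 - r)) + (1 - y / (1 - r)) / √(y / (1 - r)) =
      (y + 1 - r - √(y * (y - r))) / √(y * (1 - r)) := by
  have hc : 0 < 1 - r := by linarith
  rw [sqrt_div' _ hc.le, sqrt_div' _ hc.le, sqrt_mul hy.le, sqrt_mul hy.le]
  have hsy : 0 < √y := sqrt_pos.mpr hy
  have hsc : 0 < √(1 - r) := sqrt_pos.mpr hc
  field_simp
  linear_combination (2 * (1 - r)) * sq_sqrt hy.le + (1 - r - y) * sq_sqrt hc.le

theorem stmt9 (r y : ℝ) (hr : r ∈ Set.Ioc (0:ℝ) (1/2)) (hy : y ∈ Set.Ioc (0:ℝ) (1/2)) :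
    (∫ u in (0:ℝ)..1, 1 / Real.sqrt (mru r u y)) =
      (y + 1 - r - (if r ≤ y then Real.sqrt (y * (y - r)) else 0)) /
        Real.sqrt (y * (1 - r)) := by
  obtain ⟨hr₀, hr⟩ := hr
  obtain ⟨hy₀, hy⟩ := hy
  have h1r : 0 < 1 - r := by linarith
  have hab : (y - r) / (1 - r) ≤ y / (1 - r) := div_le_div_of_nonneg_right (by linarith) h1r.le
  have hb₀ : 0 ≤ y / (1 - r) := (div_pos hy₀ h1r).le
  have hb : y / (1 - r) ≤ 1 := (div_le_one h1r).mpr (by linarith)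
  have hite : (if r ≤ y then √(y * (y - r)) else 0) = √(y * (y - r)) :=
    ite_eq_left_iff.mpr fun hry =>
      (sqrt_eq_zero'.mpr (mul_nonpos_of_nonneg_of_nonpos hy₀.le (by linarith))).symm
  simp only [mru, median_eq_max_min hab]
  rw [integral_one_div_sqrt_max_min hab hb₀ hb, hite,
    two_sqrt_div_sub_sqrt_div_add_div_sqrt_div_eq (by linarith) hy₀]
end

section
/- Let $\kappa \in (0,1)$, $\eta > 0$, and $\theta = \frac{\kappa+\eta}{1+\eta}$. If $y \in \left[\frac{1-\kappa}{2}, \frac{1+\kappa}{2}\right]$, $r \in (\theta, 1)$, and $u \in \left[\frac{1-\eta}{2}, \frac{1+\eta}{2}\right]$, then $\frac{y-r}{1-r} < \frac{1-\eta}{2}$ and $\frac{y}{1-r} > \frac{1+\eta}{2}$, and hence $\mathrm{median}\left(\frac{y-r}{1-r}, \frac{y}{1-r}, u\right) = u$. -/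
theorem median_eq_right_of_mem_Icc {a b c : ℝ} (hc : c ∈ Set.Icc a b) : median a b c = c := by
  obtain ⟨hac, hcb⟩ := hc
  have hab : a ≤ b := hac.trans hcb
  rw [median, min_eq_left hab, max_eq_right hab, min_eq_right hcb, max_eq_right hac]

section JumpBounds

variable {κ η y r : ℝ}

theorem add_lt_mul_one_add_of_div_lt (hη : 0 < η) (hr : (κ + η) / (1 + η) < r) :
    κ + η < r * (1 + η) :=
  (div_lt_iff₀ (by linarith)).1 hr

theorem sub_div_one_sub_lt (hy : y ≤ (1 + κ) / 2) (hr1 : r < 1) (hr : κ + η < r * (1 + η)) :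
    (y - r) / (1 - r) < (1 - η) / 2 := by
  rw [div_lt_div_iff₀ (by linarith) two_pos]
  nlinarith

theorem lt_div_one_sub (hy : (1 - κ) / 2 ≤ y) (hr1 : r < 1) (hr : κ + η < r * (1 + η)) :
    (1 + η) / 2 < y / (1 - r) := by
  rw [div_lt_div_iff₀ two_pos (by linarith)]
  nlinarith

end JumpBounds

theorem stmt17_general (κ η θ y r u : ℝ) (hη : 0 < η)
    (hθ : θ = (κ + η) / (1 + η))
    (hy : y ∈ Set.Icc ((1 - κ) / 2) ((1 + κ) / 2))
    (hr : r ∈ Set.Ioo θ 1)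
    (hu : u ∈ Set.Icc ((1 - η) / 2) ((1 + η) / 2)) :
    (y - r) / (1 - r) < (1 - η) / 2 ∧ (1 + η) / 2 < y / (1 - r) ∧
      median ((y - r) / (1 - r)) (y / (1 - r)) u = u := by
  subst hθ
  have hr' := add_lt_mul_one_add_of_div_lt hη hr.1
  have hlow := sub_div_one_sub_lt hy.2 hr.2 hr'
  have hhigh := lt_div_one_sub hy.1 hr.2 hr'
  exact ⟨hlow, hhigh, median_eq_right_of_mem_Icc ⟨hlow.le.trans hu.1, hu.2.trans hhigh.le⟩⟩

theorem stmt17 (κ η θ y r u : ℝ) (hκ : κ ∈ Set.Ioo (0:ℝ) 1) (hη : 0 < η)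
    (hθ : θ = (κ + η) / (1 + η))
    (hy : y ∈ Set.Icc ((1 - κ) / 2) ((1 + κ) / 2))
    (hr : r ∈ Set.Ioo θ 1)
    (hu : u ∈ Set.Icc ((1 - η) / 2) ((1 + η) / 2)) :
    (y - r) / (1 - r) < (1 - η) / 2 ∧ (1 + η) / 2 < y / (1 - r) ∧
      median ((y - r) / (1 - r)) (y / (1 - r)) u = u :=
  stmt17_general κ η θ y r u hη hθ hy hr hu
end

section
/- Let $b \ge \log 2$, $r \in (-1,1)$, $r \ne 0$, and $y \in (0, e^{-b}]$. Then $\frac{s_r(y)}{y} \le \frac{1}{\sqrt{(1+r)^2 - 4r e^{-b}\mathbf{1}_{\{r>0\}}}}$, and consequently $\log\frac{y}{s_r(y)} \ge \frac{1}{2}\log\left((1+r)^2 - 4re^{-b}\mathbf{1}_{\{r>0\}}\right)$. -/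
/-!
Rationalising the numerator gives `y / s_r(y) = (1 + r + √((1 + r)² - 4ry)) / 2`. The constant
`C = (1 + r)² - 4r e^{-b} 1_{r > 0}`, positive since `e^{-b} ≤ 1` and `|r| < 1`, is at most both
`(1 + r)²` and `(1 + r)² - 4ry` (as `y ≤ e^{-b}`), so `√C` is at most the average `y / s_r(y)`; both claims follow by inverting and taking logarithms.
-/

noncomputable def sr (r y : ℝ) : ℝ := (1 + r - Real.sqrt ((1 + r) ^ 2 - 4 * r * y)) / (2 * r)

open Real

lemma sr_mul_add_sqrt {r y : ℝ} (hr0 : r ≠ 0) (hD : 0 ≤ (1 + r) ^ 2 - 4 * r * y) :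
    sr r y * (1 + r + √((1 + r) ^ 2 - 4 * r * y)) = 2 * y := by
  rw [sr, div_mul_eq_mul_div, div_eq_iff (mul_ne_zero two_ne_zero hr0)]
  linear_combination -sq_sqrt hD

lemma div_sr_eq {r y : ℝ} (hr0 : r ≠ 0) (hr : -1 < r) (hy : 0 < y)
    (hD : 0 ≤ (1 + r) ^ 2 - 4 * r * y) :
    y / sr r y = (1 + r + √((1 + r) ^ 2 - 4 * r * y)) / 2 := by
  have hS : 0 < 1 + r + √((1 + r) ^ 2 - 4 * r * y) :=
    add_pos_of_pos_of_nonneg (by linarith) (sqrt_nonneg _)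
  have hsr : sr r y = 2 * y / (1 + r + √((1 + r) ^ 2 - 4 * r * y)) :=
    eq_div_of_mul_eq hS.ne' (sr_mul_add_sqrt hr0 hD)
  rw [hsr]
  field_simp

lemma sqrt_le_div_sr {r y C : ℝ} (hr0 : r ≠ 0) (hr : -1 < r) (hy : 0 < y) (hC0 : 0 ≤ C)
    (hC : C ≤ (1 + r) ^ 2) (hCD : C ≤ (1 + r) ^ 2 - 4 * r * y) :
    √C ≤ y / sr r y := by
  rw [div_sr_eq hr0 hr hy (hC0.trans hCD)]
  have h₁ : √C ≤ 1 + r := (sqrt_le_sqrt hC).trans_eq (sqrt_sq (by linarith))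
  have h₂ : √C ≤ √((1 + r) ^ 2 - 4 * r * y) := sqrt_le_sqrt hCD
  linarith
section Threshold

variable {r t : ℝ}

lemma threshold_le_sq (ht : 0 ≤ t) :
    (1 + r) ^ 2 - 4 * r * t * (if 0 < r then 1 else 0) ≤ (1 + r) ^ 2 := by
  split_ifs with hr <;> nlinarith

lemma threshold_le_discr {y : ℝ} (hy : 0 ≤ y) (hyt : y ≤ t) :
    (1 + r) ^ 2 - 4 * r * t * (if 0 < r then 1 else 0) ≤ (1 + r) ^ 2 - 4 * r * y := by
  split_ifs with hr <;> nlinarith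

lemma threshold_pos (hr : r ∈ Set.Ioo (-1 : ℝ) 1) (ht : t ≤ 1) :
    0 < (1 + r) ^ 2 - 4 * r * t * (if 0 < r then 1 else 0) := by
  obtain ⟨hr₁, hr₂⟩ := hr
  split_ifs with hr₀ <;> nlinarith

end Threshold

theorem stmt19 (b r y : ℝ) (hb : Real.log 2 ≤ b) (hr : r ∈ Set.Ioo (-1:ℝ) 1) (hr0 : r ≠ 0)
    (hy : y ∈ Set.Ioc (0:ℝ) (Real.exp (-b))) :
    sr r y / y ≤
        1 / Real.sqrt ((1 + r) ^ 2 - 4 * r * Real.exp (-b) * (if 0 < r then 1 else 0)) ∧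
      (1 / 2) * Real.log ((1 + r) ^ 2 - 4 * r * Real.exp (-b) * (if 0 < r then 1 else 0)) ≤
        Real.log (y / sr r y) := by
  obtain ⟨hy₀, hyb⟩ := hy
  have hb₁ : exp (-b) ≤ 1 := exp_le_one_iff.2 (by linarith [log_nonneg one_le_two])
  have hC₀ := threshold_pos hr hb₁
  have key : √((1 + r) ^ 2 - 4 * r * exp (-b) * (if 0 < r then 1 else 0)) ≤ y / sr r y :=
    sqrt_le_div_sr hr0 hr.1 hy₀ hC₀.le (threshold_le_sq (exp_pos _).le)
      (threshold_le_discr hy₀.le hyb)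
  constructor
  · rw [← inv_div, one_div]
    exact inv_anti₀ (sqrt_pos.2 hC₀) key
  · rw [one_div_mul_eq_div, ← log_sqrt hC₀.le]
    exact log_le_log (sqrt_pos.2 hC₀) key
end
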